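/- arXiv:math/0606719 — 3 statements merged into one kernel-verified Lean document; each statement's English description precedes it below -/
import Mathlib

section
/- Let d ≥ 2 and let Y be the discrete-time simple random walk on ℤ^d started at 0. For ρ > 0 let W_ρ = Y(T_ρ), where T_ρ = min{k ∈ ℕ : |Y(k)| > ρ} is the first exit time from the ball of radius ρ. Then for every ξ ∈ ℝ^d and any sequences ρ_n → ∞ and h_n → ∞, lim_{n→∞} h_n² (1 − E[exp(−ξ · W_{ρ_n} / (ρ_n h_n))]) = −|ξ|² / (2d). -/
open MeasureTheory ProbabilityTheory Filter Set
open scoped ENNReal NNReal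

/-- Euclidean norm of a point of `ℤ^d`. -/
noncomputable def znorm {d : ℕ} (x : Fin d → ℤ) : ℝ :=
  Real.sqrt (∑ i, ((x i : ℝ)) ^ 2)

/-- The unit step of the simple random walk indexed by a coordinate and a sign. -/
def stepVec (d : ℕ) (p : Fin d × Bool) : Fin d → ℤ :=
  fun j => if j = p.1 then (if p.2 then 1 else -1) else 0

/-- `Y` is a simple random walk on `ℤ^d` started at `0` under `P`. -/
structure IsSRW {Ω : Type*} [MeasurableSpace Ω] (P : Measure Ω) (d : ℕ)
    (Y : ℕ → Ω → (Fin d → ℤ)) : Prop where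
  meas : ∀ k, Measurable (Y k)
  init : ∀ ω, Y 0 ω = 0
  indep : iIndepFun (fun k ω => Y (k + 1) ω - Y k ω) P
  step : ∀ k p, P {ω | Y (k + 1) ω - Y k ω = stepVec d p} = (2 * d : ℝ≥0∞)⁻¹

/-- i.i.d. heavy-tailed random environment on `ℤ^d`. -/
structure IsEnv {Ω : Type*} [MeasurableSpace Ω] (P : Measure Ω) (d : ℕ) (α : ℝ)
    (L : ℝ → ℝ) (τ : (Fin d → ℤ) → Ω → ℝ) : Prop where
  meas : ∀ x, Measurable (τ x)
  pos : ∀ x ω, 0 < τ x ω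
  indep : iIndepFun τ P
  tail : ∀ x u, (1 : ℝ) ≤ u → P {ω | u ≤ τ x ω} = ENNReal.ofReal (u ^ (-α) * (1 + L u))
  decay : Tendsto L atTop (nhds 0)

noncomputable def gscale (α : ℝ) (n : ℕ) : ℝ := (2 : ℝ) ^ ((n : ℝ) / α)
noncomputable def rscale (n : ℕ) : ℝ := (2 : ℝ) ^ ((n : ℝ) / 2)
noncomputable def rhoscale (d n : ℕ) : ℝ := (2 : ℝ) ^ ((1 - 1 / (3 * (d : ℝ))) * n / 2)
noncomputable def nuscale (d n : ℕ) : ℝ := (2 : ℝ) ^ ((1 / (d : ℝ)) * n / 2)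
noncomputable def iotascale (d n : ℕ) : ℝ := (2 : ℝ) ^ ((1 - 2 / (3 * (d : ℝ))) * n / 2)
noncomputable def hscale (d n : ℕ) : ℝ := rscale n / rhoscale d n

/-- the big ball `𝔻(n)` of radius `m · r(n)`. -/
def bigD (d m n : ℕ) : Set (Fin d → ℤ) := {x | znorm x ≤ m * rscale n}

/-- the cube of side `ℓ` centered at `x`. -/
def cube {d : ℕ} (x : Fin d → ℤ) (ℓ : ℝ) : Set (Fin d → ℤ) :=
  {y | ∀ i, |((y i : ℝ)) - ((x i : ℝ))| ≤ ℓ / 2}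

/-- the set of deep traps `T_ε^M(n)`. -/
noncomputable def traps {Ω : Type*} {d : ℕ} (τ : (Fin d → ℤ) → Ω → ℝ) (α : ℝ) (m : ℕ)
    (ε M : ℝ) (n : ℕ) (ω : Ω) : Set (Fin d → ℤ) :=
  {x ∈ bigD d m n | ε * gscale α n ≤ τ x ω ∧ τ x ω < M * gscale α n}

/-- the set `ℰ(n)` of sites far from all deep traps. -/
noncomputable def calE {Ω : Type*} {d : ℕ} (τ : (Fin d → ℤ) → Ω → ℝ) (α : ℝ) (m : ℕ)
    (ε M : ℝ) (n : ℕ) (ω : Ω) : Set (Fin d → ℤ) :=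
  {x ∈ bigD d m n | ∀ y ∈ traps τ α m ε M n ω, nuscale d n < znorm (x - y)}

/-- the set `ℰ₀(n)` of sites of `ℰ(n)` far from the boundary of `𝔻(n)`. -/
noncomputable def calE₀ {Ω : Type*} {d : ℕ} (τ : (Fin d → ℤ) → Ω → ℝ) (α : ℝ) (m : ℕ)
    (ε M : ℝ) (n : ℕ) (ω : Ω) : Set (Fin d → ℤ) :=
  {x ∈ calE τ α m ε M n ω | ∀ y, y ∉ bigD d m n → rhoscale d n < znorm (x - y)}


/-- first exit time of the walk from the ball of radius `ρ` around the origin. -/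
noncomputable def exitTime {Ω : Type*} {d : ℕ} (Y : ℕ → Ω → (Fin d → ℤ)) (ρ : ℝ) (ω : Ω) : ℕ :=
  sInf {k | ρ < znorm (Y k ω)}

/-!
The exit point `W` is a measurable function of the i.i.d. increments, so its law is the push-forward
of the infinite product of the step law. Flipping the sign of a coordinate or swapping two
coordinates permutes the steps and preserves the norm, so this law is invariant under both
operations; hence `E[ξ·W] = 0` and `E[(ξ·W)²] = |ξ|² E|W|² / d`. The walk leaves every ball almost
surely: a run of `m > 2ρ` equal steps forces an exit, and a run starting at time `n` has
probability `(2d)⁻ᵐ` independently of the walk up to time `n`, so the probability of staying in the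
ball decays geometrically. It leaves with a unit step, so `ρ < |W| ≤ ρ + 1` and `E|W|² / ρ² → 1`.
Since `|ξ·W / (ρh)| = O(1/h)`, a second-order Taylor expansion of `exp` gives
`h² (1 - E exp(-ξ·W / (ρh))) = -|ξ|² / (2d) · E|W|² / ρ² + O(1/h)`.
-/

open scoped Topology

lemma measurable_nat_sInf {α : Type*} [MeasurableSpace α] {p : ℕ → α → Prop}
    (hp : ∀ k, MeasurableSet {x | p k x}) : Measurable fun x => sInf {k | p k x} := by
  classical
  have hex : ∀ x, ∃ k, p k x ∨ ∀ j, ¬ p j x := fun x => by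
    by_cases h : ∃ k, p k x
    · exact h.imp fun k hk => Or.inl hk
    · exact ⟨0, Or.inr (not_exists.1 h)⟩
  -- `Nat.find` of `p k x ∨ ∀ j, ¬ p j x` reproduces the junk value `sInf ∅ = 0`.
  have hfind : (fun x => sInf {k | p k x}) = fun x => Nat.find (hex x) := by
    funext x
    by_cases h : ∃ k, p k x
    · obtain ⟨k, hk⟩ := h
      refine le_antisymm (Nat.sInf_le ?_)
        (Nat.find_min' _ (Or.inl (Nat.sInf_mem (s := {k | p k x}) ⟨k, hk⟩)))
      exact (Nat.find_spec (hex x)).resolve_right fun hn => hn k hk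
    · have hempty : {k | p k x} = ∅ := eq_empty_iff_forall_notMem.2 fun k hk => h ⟨k, hk⟩
      rw [hempty, Nat.sInf_empty]
      exact ((Nat.find_eq_zero _).2 (Or.inr (not_exists.1 h))).symm
  rw [hfind]
  refine measurable_find hex fun k => ?_
  simpa only [ofPred_or, ofPred_forall, compl_ofPred] using
    (hp k).union (MeasurableSet.iInter fun j => (hp j).compl)

lemma integral_comp_of_map_eq {α : Type*} [MeasurableSpace α] [DiscreteMeasurableSpace α]
    {μ : Measure α} {σ : α → α} (hσ : μ.map σ = μ) (f : α → ℝ) : ∫ x, f (σ x) ∂μ = ∫ x, f x ∂μ := by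
  conv_rhs => rw [← hσ]
  rw [integral_map Measurable.of_discrete.aemeasurable Measurable.of_discrete.aestronglyMeasurable]

lemma integrable_of_ae_abs_le {α : Type*} [MeasurableSpace α] [DiscreteMeasurableSpace α]
    {μ : Measure α} [IsFiniteMeasure μ] {f : α → ℝ} {C : ℝ} (hf : ∀ᵐ x ∂μ, |f x| ≤ C) :
    Integrable f μ :=
  Integrable.of_bound Measurable.of_discrete.aestronglyMeasurable C (by simpa using hf)

lemma abs_integral_exp_neg_sub_le {α : Type*} [MeasurableSpace α] {ν : Measure α}
    [IsProbabilityMeasure ν] {Z : α → ℝ} (hZm : AEStronglyMeasurable Z ν) {c : ℝ} (hc : c ≤ 1)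
    (hZ : ∀ᵐ x ∂ν, |Z x| ≤ c) :
    |∫ x, Real.exp (-Z x) ∂ν - (1 - ∫ x, Z x ∂ν + (∫ x, Z x ^ 2 ∂ν) / 2)| ≤ c ^ 3 := by
  have hbdd : ∀ {f : α → ℝ} (C : ℝ), AEStronglyMeasurable f ν → (∀ᵐ x ∂ν, |f x| ≤ C) →
      Integrable f ν := fun C hf h => Integrable.of_bound hf C (by simpa using h)
  have hZi : Integrable Z ν := hbdd c hZm hZ
  have hZ2 : Integrable (fun x => Z x ^ 2) ν := hbdd (c ^ 2) (hZm.pow 2) <| hZ.mono fun x hx => by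
    rw [abs_pow]; exact pow_le_pow_left₀ (abs_nonneg _) hx 2
  have hexp : Integrable (fun x => Real.exp (-Z x)) ν := by
    refine hbdd (Real.exp 1) (Real.continuous_exp.comp_aestronglyMeasurable hZm.neg) ?_
    filter_upwards [hZ] with x hx
    rw [abs_of_pos (Real.exp_pos _)]
    exact Real.exp_le_exp.2 ((neg_le_abs (Z x)).trans (hx.trans hc))
  have hrem : ∀ᵐ x ∂ν, ‖Real.exp (-Z x) - (1 - Z x + Z x ^ 2 / 2)‖ ≤ c ^ 3 := by
    filter_upwards [hZ] with x hx
    have h := Real.exp_bound (x := -Z x) (by rw [abs_neg]; exact hx.trans hc) (n := 3) (by norm_num)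
    norm_num [Finset.sum_range_succ, Nat.factorial] at h
    rw [Real.norm_eq_abs]
    calc _ = |Real.exp (-Z x) - (1 + -Z x + Z x ^ 2 / 2)| := by ring_nf
      _ ≤ |Z x| ^ 3 * (2 / 9) := h
      _ ≤ c ^ 3 := by
        nlinarith [pow_le_pow_left₀ (abs_nonneg _) hx 3, pow_nonneg (abs_nonneg (Z x)) 3]
  have hlin : Integrable (fun x => 1 - Z x) ν := (integrable_const 1).sub hZi
  have hquad : Integrable (fun x => Z x ^ 2 / 2) ν := hZ2.div_const 2
  have hpoly : Integrable (fun x => 1 - Z x + Z x ^ 2 / 2) ν := hlin.add hquad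
  have h := norm_integral_le_of_norm_le_const hrem
  rw [integral_sub hexp hpoly, integral_add hlin hquad,
    integral_sub (integrable_const 1) hZi, integral_div] at h
  simpa using h

section EuclideanNorm

variable {d : ℕ}

noncomputable def zToEuclidean (x : Fin d → ℤ) : EuclideanSpace ℝ (Fin d) :=
  WithLp.toLp 2 fun i => (x i : ℝ)

lemma znorm_eq_norm (x : Fin d → ℤ) : znorm x = ‖zToEuclidean x‖ := by
  simp [znorm, zToEuclidean, EuclideanSpace.norm_eq]

lemma zToEuclidean_add (x y : Fin d → ℤ) :
    zToEuclidean (x + y) = zToEuclidean x + zToEuclidean y := by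
  ext i; simp [zToEuclidean]

lemma znorm_add_le (x y : Fin d → ℤ) : znorm (x + y) ≤ znorm x + znorm y := by
  simpa only [znorm_eq_norm, zToEuclidean_add] using norm_add_le (zToEuclidean x) (zToEuclidean y)

lemma znorm_nonneg (x : Fin d → ℤ) : 0 ≤ znorm x := Real.sqrt_nonneg _

lemma znorm_zero : znorm (0 : Fin d → ℤ) = 0 := by simp [znorm]

lemma znorm_sq (x : Fin d → ℤ) : znorm x ^ 2 = ∑ i, ((x i : ℝ)) ^ 2 :=
  Real.sq_sqrt (by positivity)

lemma abs_apply_le_znorm (x : Fin d → ℤ) (i : Fin d) : |(x i : ℝ)| ≤ znorm x := by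
  rw [← Real.sqrt_sq_eq_abs]
  exact Real.sqrt_le_sqrt (Finset.single_le_sum (f := fun j => ((x j : ℝ)) ^ 2)
    (fun j _ => sq_nonneg _) (Finset.mem_univ i))

lemma znorm_stepVec (p : Fin d × Bool) : znorm (stepVec d p) = 1 := by
  rw [znorm, Finset.sum_eq_single p.1 (fun j _ hj => by simp [stepVec, hj]) (by simp)]
  cases p.2 <;> simp [stepVec]

lemma stepVec_injective : Function.Injective (stepVec d) := by
  rintro ⟨i, b⟩ ⟨j, c⟩ h
  have hi := congrFun h i
  by_cases hij : i = j
  · subst hij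
    cases b <;> cases c <;> simp_all [stepVec]
  · cases b <;> simp [stepVec, hij] at hi

lemma abs_sum_mul_le (ξ : Fin d → ℝ) (x : Fin d → ℤ) :
    |∑ i, ξ i * (x i : ℝ)| ≤ (∑ i, |ξ i|) * znorm x := by
  rw [Finset.sum_mul]
  refine (Finset.abs_sum_le_sum_abs _ _).trans (Finset.sum_le_sum fun i _ => ?_)
  rw [abs_mul]
  exact mul_le_mul_of_nonneg_left (abs_apply_le_znorm x i) (abs_nonneg _)

end EuclideanNorm

section CoordinateSymmetries

variable {d : ℕ}

def coordFlip (a : Fin d) : (Fin d → ℤ) →+ (Fin d → ℤ) where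
  toFun x i := if i = a then -x i else x i
  map_zero' := by ext i; simp
  map_add' x y := by ext i; by_cases h : i = a <;> simp [h, add_comm]

def coordSwap (a b : Fin d) : (Fin d → ℤ) →+ (Fin d → ℤ) where
  toFun x := x ∘ Equiv.swap a b
  map_zero' := rfl
  map_add' _ _ := rfl

lemma znorm_coordFlip (a : Fin d) (x : Fin d → ℤ) : znorm (coordFlip a x) = znorm x := by
  unfold znorm
  congr 1
  refine Finset.sum_congr rfl fun i _ => ?_
  simp only [coordFlip, AddMonoidHom.coe_mk, ZeroHom.coe_mk]
  split_ifs <;> simp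

lemma znorm_coordSwap (a b : Fin d) (x : Fin d → ℤ) : znorm (coordSwap a b x) = znorm x := by
  unfold znorm
  congr 1
  exact Equiv.sum_comp (Equiv.swap a b) fun i => ((x i : ℝ)) ^ 2

lemma coordFlip_stepVec (a : Fin d) (p : Fin d × Bool) :
    coordFlip a (stepVec d p) = stepVec d (p.1, if p.1 = a then !p.2 else p.2) := by
  rcases p with ⟨j, b⟩
  ext i
  by_cases hi : i = j <;> by_cases ha : i = a <;> cases b <;> simp_all [coordFlip, stepVec]

lemma coordSwap_stepVec (a b : Fin d) (p : Fin d × Bool) :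
    coordSwap a b (stepVec d p) = stepVec d (Equiv.swap a b p.1, p.2) := by
  ext i
  simp [coordSwap, stepVec, Equiv.swap_apply_eq_iff]

def coordFlipPerm (a : Fin d) : Equiv.Perm (Fin d × Bool) :=
  Function.Involutive.toPerm (fun p => (p.1, if p.1 = a then !p.2 else p.2))
    fun ⟨j, b⟩ => by by_cases h : j = a <;> simp [h]

end CoordinateSymmetries

section ExitLaw

variable {d : ℕ}

noncomputable def stepLaw (d : ℕ) : Measure (Fin d → ℤ) :=
  (2 * d : ℝ≥0∞)⁻¹ • ∑ p, Measure.dirac (stepVec d p)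

lemma inv_two_mul_mul_card_steps [NeZero d] :
    (2 * d : ℝ≥0∞)⁻¹ * Fintype.card (Fin d × Bool) = 1 := by
  rw [Fintype.card_prod, Fintype.card_fin, Fintype.card_bool, mul_comm d, Nat.cast_mul,
    Nat.cast_ofNat]
  exact ENNReal.inv_mul_cancel (by simp [NeZero.ne d]) (by finiteness)

instance [NeZero d] : IsProbabilityMeasure (stepLaw d) :=
  ⟨by simpa [stepLaw] using inv_two_mul_mul_card_steps (d := d)⟩

lemma stepLaw_stepVec (p : Fin d × Bool) : stepLaw d {stepVec d p} = (2 * d : ℝ≥0∞)⁻¹ := by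
  simp [stepLaw, Pi.single_apply, stepVec_injective.eq_iff]

lemma measure_range_stepVec [NeZero d] (ν : Measure (Fin d → ℤ))
    (hν : ∀ p, ν {stepVec d p} = (2 * d : ℝ≥0∞)⁻¹) : ν (range (stepVec d)) = 1 := by
  classical
  have hrange : range (stepVec d) = ↑(Finset.univ.image (stepVec d)) := by simp
  rw [hrange, ← sum_measure_singleton,
    Finset.sum_image fun p _ q _ h => stepVec_injective h]
  simp only [hν, Finset.sum_const, Finset.card_univ, nsmul_eq_mul]
  rw [mul_comm]
  exact inv_two_mul_mul_card_steps

lemma eq_stepLaw_of_apply_stepVec [NeZero d] (ν : Measure (Fin d → ℤ)) [IsProbabilityMeasure ν]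
    (hν : ∀ p, ν {stepVec d p} = (2 * d : ℝ≥0∞)⁻¹) : ν = stepLaw d := by
  have hnull : ∀ (μ : Measure (Fin d → ℤ)) [IsProbabilityMeasure μ],
      (∀ p, μ {stepVec d p} = (2 * d : ℝ≥0∞)⁻¹) → μ (range (stepVec d))ᶜ = 0 := fun μ _ hμ => by
    rw [prob_compl_eq_zero_iff MeasurableSet.of_discrete, measure_range_stepVec μ hμ]
  refine Measure.ext_of_singleton fun x => ?_
  by_cases hx : x ∈ range (stepVec d)
  · obtain ⟨p, rfl⟩ := hx
    rw [hν, stepLaw_stepVec]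
  · have hsub : {x} ⊆ (range (stepVec d))ᶜ := singleton_subset_iff.2 hx
    rw [measure_mono_null hsub (hnull ν hν), measure_mono_null hsub (hnull _ stepLaw_stepVec)]

lemma stepLaw_map_eq (σ : (Fin d → ℤ) →+ (Fin d → ℤ)) (e : Equiv.Perm (Fin d × Bool))
    (he : ∀ p, σ (stepVec d p) = stepVec d (e p)) : (stepLaw d).map σ = stepLaw d := by
  rw [stepLaw, Measure.map_smul, Measure.map_finset_sum' Measurable.of_discrete.aemeasurable]
  simp_rw [Measure.map_dirac' Measurable.of_discrete, he]
  rw [Equiv.sum_comp e fun p => Measure.dirac (stepVec d p)]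

def partialSums (δ : ℕ → Fin d → ℤ) (k : ℕ) : Fin d → ℤ := ∑ j ∈ Finset.range k, δ j

noncomputable def exitPoint (ρ : ℝ) (y : ℕ → Fin d → ℤ) : Fin d → ℤ :=
  y (sInf {k | ρ < znorm (y k)})

noncomputable def exitLaw (d : ℕ) (ρ : ℝ) : Measure (Fin d → ℤ) :=
  (Measure.infinitePi fun _ : ℕ => stepLaw d).map fun δ => exitPoint ρ (partialSums δ)

lemma measurable_exitPoint (ρ : ℝ) : Measurable (exitPoint (d := d) ρ) := by
  have heval : Measurable fun q : (ℕ → Fin d → ℤ) × ℕ => q.1 q.2 :=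
    measurable_from_prod_countable_left fun k => measurable_pi_apply k
  have htime : Measurable fun y : ℕ → Fin d → ℤ => sInf {k | ρ < znorm (y k)} :=
    measurable_nat_sInf fun k => measurableSet_lt measurable_const
      ((Measurable.of_discrete (f := znorm (d := d))).comp (measurable_pi_apply k))
  exact heval.comp (measurable_id.prodMk htime)

lemma measurable_partialSums : Measurable (partialSums (d := d)) :=
  measurable_pi_lambda _ fun _ => Finset.measurable_sum _ fun j _ => measurable_pi_apply j

lemma partialSums_map (σ : (Fin d → ℤ) →+ (Fin d → ℤ)) (δ : ℕ → Fin d → ℤ) :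
    partialSums (fun k => σ (δ k)) = fun k => σ (partialSums δ k) := by
  ext k : 1
  simp [partialSums, map_sum]

lemma exitPoint_map {σ : (Fin d → ℤ) → (Fin d → ℤ)} (hσ : ∀ x, znorm (σ x) = znorm x) (ρ : ℝ)
    (y : ℕ → Fin d → ℤ) : exitPoint ρ (fun k => σ (y k)) = σ (exitPoint ρ y) := by
  simp [exitPoint, hσ]

lemma exitLaw_map_eq [NeZero d] (ρ : ℝ) (σ : (Fin d → ℤ) →+ (Fin d → ℤ))
    (hσ : ∀ x, znorm (σ x) = znorm x) (e : Equiv.Perm (Fin d × Bool))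
    (he : ∀ p, σ (stepVec d p) = stepVec d (e p)) : (exitLaw d ρ).map σ = exitLaw d ρ := by
  have hG : Measurable fun δ : ℕ → Fin d → ℤ => exitPoint ρ (partialSums δ) :=
    (measurable_exitPoint ρ).comp measurable_partialSums
  rw [exitLaw, Measure.map_map Measurable.of_discrete hG]
  have hcomm : σ ∘ (fun δ => exitPoint ρ (partialSums δ))
      = (fun δ => exitPoint ρ (partialSums δ)) ∘ fun δ k => σ (δ k) := by
    funext δ
    simp [partialSums_map, exitPoint_map hσ]
  have hσ' : Measurable fun (δ : ℕ → Fin d → ℤ) k => σ (δ k) :=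
    measurable_pi_lambda _ fun k => Measurable.of_discrete.comp (measurable_pi_apply k)
  rw [hcomm, ← Measure.map_map hG hσ', Measure.infinitePi_map_pi _ fun _ => Measurable.of_discrete]
  simp_rw [stepLaw_map_eq σ e he]

instance [NeZero d] (ρ : ℝ) : IsProbabilityMeasure (exitLaw d ρ) :=
  Measure.isProbabilityMeasure_map
    ((measurable_exitPoint ρ).comp measurable_partialSums).aemeasurable

end ExitLaw

namespace IsSRW

variable {Ω : Type*} [MeasurableSpace Ω] {P : Measure Ω} {d : ℕ} {Y : ℕ → Ω → (Fin d → ℤ)}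

lemma eq_partialSums (hY : IsSRW P d Y) (ω : Ω) :
    (fun k => Y k ω) = partialSums fun k => Y (k + 1) ω - Y k ω := by
  funext k
  simp [partialSums, Finset.sum_range_sub (fun j => Y j ω), hY.init]

lemma measurable_increment (hY : IsSRW P d Y) (k : ℕ) :
    Measurable fun ω => Y (k + 1) ω - Y k ω :=
  (hY.meas _).sub (hY.meas _)

lemma hasLaw_increment [IsProbabilityMeasure P] [NeZero d] (hY : IsSRW P d Y) (k : ℕ) :
    HasLaw (fun ω => Y (k + 1) ω - Y k ω) (stepLaw d) P where
  aemeasurable := (hY.measurable_increment k).aemeasurable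
  map_eq := by
    have := Measure.isProbabilityMeasure_map (μ := P) (hY.measurable_increment k).aemeasurable
    refine eq_stepLaw_of_apply_stepVec _ fun p => ?_
    rw [Measure.map_apply (hY.measurable_increment k) MeasurableSet.of_discrete]
    exact hY.step k p

lemma hasLaw_exitPoint [IsProbabilityMeasure P] [NeZero d] (hY : IsSRW P d Y) (ρ : ℝ) :
    HasLaw (fun ω => Y (exitTime Y ρ ω) ω) (exitLaw d ρ) P := by
  have hincr : HasLaw (fun ω k => Y (k + 1) ω - Y k ω) (Measure.infinitePi fun _ => stepLaw d) P :=
    hY.indep.hasLaw_infinitePi hY.hasLaw_increment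
      (measurable_pi_lambda _ hY.measurable_increment).aemeasurable
  have hG : HasLaw (fun δ => exitPoint ρ (partialSums δ)) (exitLaw d ρ)
      (Measure.infinitePi fun _ => stepLaw d) :=
    ⟨((measurable_exitPoint ρ).comp measurable_partialSums).aemeasurable, rfl⟩
  refine (hG.comp hincr).congr (ae_of_all _ fun ω => ?_)
  simp only [Function.comp_apply, ← hY.eq_partialSums]
  rfl

lemma ae_increment_mem_range [IsProbabilityMeasure P] [NeZero d] (hY : IsSRW P d Y) :
    ∀ᵐ ω ∂P, ∀ k, Y (k + 1) ω - Y k ω ∈ range (stepVec d) := by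
  refine ae_all_iff.2 fun k => ((hY.hasLaw_increment k).ae_iff Measurable.of_discrete).2 ?_
  exact (prob_compl_eq_zero_iff MeasurableSet.of_discrete).2
    (measure_range_stepVec _ stepLaw_stepVec)

end IsSRW

section Exit

variable {Ω : Type*} {d : ℕ}

def noExitUntil (Y : ℕ → Ω → (Fin d → ℤ)) (ρ : ℝ) (N : ℕ) : Set Ω :=
  {ω | ∀ k ≤ N, znorm (Y k ω) ≤ ρ}

def stepRun (Y : ℕ → Ω → (Fin d → ℤ)) (p : Fin d × Bool) (n m : ℕ) : Set Ω :=
  {ω | ∀ i ∈ Finset.Ico n (n + m), Y (i + 1) ω - Y i ω = stepVec d p}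

lemma stepRun_eq_biInter (Y : ℕ → Ω → (Fin d → ℤ)) (p : Fin d × Bool) (n m : ℕ) :
    stepRun Y p n m
      = ⋂ i ∈ Finset.Ico n (n + m), (fun ω => Y (i + 1) ω - Y i ω) ⁻¹' {stepVec d p} := by
  ext ω; simp [stepRun]

lemma eq_add_nsmul_of_mem_stepRun {Y : ℕ → Ω → (Fin d → ℤ)} {p : Fin d × Bool} {n m : ℕ}
    {ω : Ω} (hω : ω ∈ stepRun Y p n m) : Y (n + m) ω = Y n ω + m • stepVec d p := by
  induction m with
  | zero => simp
  | succ m ih =>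
    have hlast := hω (n + m) (by simp)
    rw [← add_assoc, ← sub_add_cancel (Y (n + m + 1) ω) (Y (n + m) ω), hlast,
      ih fun i hi => hω i (Finset.Ico_subset_Ico_right (by omega) hi), succ_nsmul]
    abel

lemma lt_znorm_of_mem_stepRun {Y : ℕ → Ω → (Fin d → ℤ)} {p : Fin d × Bool} {n m : ℕ} {ρ : ℝ}
    (hm : 2 * ρ < m) {ω : Ω} (hω : ω ∈ stepRun Y p n m) (hn : znorm (Y n ω) ≤ ρ) :
    ρ < znorm (Y (n + m) ω) := by
  by_contra! hnm
  obtain ⟨j, b⟩ := p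
  have hcoord : ((Y (n + m) ω j : ℤ) : ℝ) - (Y n ω j : ℝ) = if b then (m : ℝ) else -m := by
    rw [eq_add_nsmul_of_mem_stepRun hω]
    cases b <;> simp [stepVec]
  have h1 := abs_apply_le_znorm (Y (n + m) ω) j
  have h2 := abs_apply_le_znorm (Y n ω) j
  have h3 : (m : ℝ) ≤ |((Y (n + m) ω j : ℤ) : ℝ) - (Y n ω j : ℝ)| := by
    rw [hcoord]; split_ifs <;> simp
  linarith [abs_sub (((Y (n + m) ω j : ℤ) : ℝ)) (Y n ω j : ℝ)]

end Exit

namespace IsSRW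

variable {Ω : Type*} [MeasurableSpace Ω] {P : Measure Ω} {d : ℕ} {Y : ℕ → Ω → (Fin d → ℤ)}

lemma measure_stepRun (hY : IsSRW P d Y) (p : Fin d × Bool) (n m : ℕ) :
    P (stepRun Y p n m) = (2 * d : ℝ≥0∞)⁻¹ ^ m := by
  rw [stepRun_eq_biInter,
    hY.indep.measure_inter_preimage_eq_mul _ fun _ _ => MeasurableSet.of_discrete]
  simp only [preimage, mem_singleton_iff, hY.step, Finset.prod_const, Nat.card_Ico,
    Nat.add_sub_cancel_left]

lemma measure_noExitUntil_inter_stepRun_compl (hY : IsSRW P d Y) (ρ : ℝ) (p : Fin d × Bool)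
    (n m : ℕ) :
    P (noExitUntil Y ρ n ∩ (stepRun Y p n m)ᶜ)
      = P (noExitUntil Y ρ n) * P (stepRun Y p n m)ᶜ := by
  let M : ℕ → MeasurableSpace Ω := fun i =>
    MeasurableSpace.comap (fun ω => Y (i + 1) ω - Y i ω) inferInstance
  have hM : ∀ s : Set ℕ, ∀ i ∈ s, Measurable[⨆ j ∈ s, M j] fun ω => Y (i + 1) ω - Y i ω :=
    fun s i hi => (comap_measurable _).mono (le_iSup₂ (f := fun j (_ : j ∈ s) => M j) i hi) le_rfl
  have hind : Indep (⨆ i ∈ Iio n, M i) (⨆ i ∈ (Finset.Ico n (n + m) : Set ℕ), M i) P :=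
    indep_iSup_of_disjoint (fun i => (hY.measurable_increment i).comap_le)
      ((iIndepFun_iff_iIndep _ _ _).1 hY.indep)
      (Set.disjoint_left.2 fun i hi hi' => not_le.2 (mem_Iio.1 hi) (Finset.mem_Ico.1 hi').1)
  have hY_past : ∀ k ≤ n, Measurable[⨆ i ∈ Iio n, M i] (Y k) := fun k hk => by
    have hsum : Y k = fun ω => ∑ j ∈ Finset.range k, (Y (j + 1) ω - Y j ω) :=
      funext fun ω => congrFun (hY.eq_partialSums ω) k
    rw [hsum]
    exact Finset.measurable_sum _ fun j hj =>
      hM _ j (mem_Iio.2 ((Finset.mem_range.1 hj).trans_le hk))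
  have hpast : MeasurableSet[⨆ i ∈ Iio n, M i] (noExitUntil Y ρ n) := by
    have : noExitUntil Y ρ n = ⋂ k ∈ Iic n, Y k ⁻¹' {x | znorm x ≤ ρ} := by
      ext ω; simp [noExitUntil]
    rw [this]
    exact MeasurableSet.biInter (to_countable _) fun k hk =>
      hY_past k hk MeasurableSet.of_discrete
  have hfuture : MeasurableSet[⨆ i ∈ (Finset.Ico n (n + m) : Set ℕ), M i] (stepRun Y p n m) := by
    rw [stepRun_eq_biInter]
    exact Finset.measurableSet_biInter _ fun i hi => hM _ i hi MeasurableSet.of_discrete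
  exact (Indep_iff _ _ _).1 hind _ _ hpast hfuture.compl

lemma measure_noExitUntil_add_le [IsProbabilityMeasure P] [NeZero d] (hY : IsSRW P d Y)
    {ρ : ℝ} {m : ℕ} (hm : 2 * ρ < m) (n : ℕ) :
    P (noExitUntil Y ρ (n + m)) ≤ P (noExitUntil Y ρ n) * (1 - (2 * d : ℝ≥0∞)⁻¹ ^ m) := by
  let p : Fin d × Bool := (0, true)
  have hsub : noExitUntil Y ρ (n + m) ⊆ noExitUntil Y ρ n ∩ (stepRun Y p n m)ᶜ :=
    fun ω hω => ⟨fun k hk => hω k (by omega), fun hrun =>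
      (lt_znorm_of_mem_stepRun hm hrun (hω n (by omega))).not_ge (hω (n + m) le_rfl)⟩
  have hrun : MeasurableSet (stepRun Y p n m) := by
    rw [stepRun_eq_biInter]
    exact Finset.measurableSet_biInter _ fun i _ =>
      hY.measurable_increment i MeasurableSet.of_discrete
  calc P (noExitUntil Y ρ (n + m)) ≤ P (noExitUntil Y ρ n ∩ (stepRun Y p n m)ᶜ) := measure_mono hsub
    _ = _ := by
      rw [hY.measure_noExitUntil_inter_stepRun_compl, prob_compl_eq_one_sub hrun,
        hY.measure_stepRun]

lemma measure_noExitUntil_mul_le [IsProbabilityMeasure P] [NeZero d] (hY : IsSRW P d Y)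
    {ρ : ℝ} {m : ℕ} (hm : 2 * ρ < m) (K : ℕ) :
    P (noExitUntil Y ρ (m * K)) ≤ (1 - (2 * d : ℝ≥0∞)⁻¹ ^ m) ^ K := by
  induction K with
  | zero => simpa using prob_le_one
  | succ K ih =>
    calc P (noExitUntil Y ρ (m * (K + 1)))
        ≤ P (noExitUntil Y ρ (m * K)) * (1 - (2 * d : ℝ≥0∞)⁻¹ ^ m) :=
          mul_add_one m K ▸ hY.measure_noExitUntil_add_le hm _
      _ ≤ _ := by rw [pow_succ]; gcongr

lemma ae_exists_lt_znorm [IsProbabilityMeasure P] [NeZero d] (hY : IsSRW P d Y) (ρ : ℝ) :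
    ∀ᵐ ω ∂P, ∃ k, ρ < znorm (Y k ω) := by
  set m := ⌊2 * ρ⌋₊ + 1
  have hm : 2 * ρ < m := by simpa [m] using Nat.lt_floor_add_one (2 * ρ)
  have hq : 1 - (2 * d : ℝ≥0∞)⁻¹ ^ m < 1 :=
    ENNReal.sub_lt_self ENNReal.one_ne_top one_ne_zero (by simp [ENNReal.mul_eq_top])
  rw [ae_iff]
  refine le_antisymm (ge_of_tendsto' (ENNReal.tendsto_pow_atTop_nhds_zero_of_lt_one hq)
    fun K => (measure_mono fun ω hω k _ => ?_).trans (hY.measure_noExitUntil_mul_le hm K)) zero_le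
  exact not_lt.1 fun hk => hω ⟨k, hk⟩

lemma ae_exitPoint_mem_shell [IsProbabilityMeasure P] [NeZero d] (hY : IsSRW P d Y) {ρ : ℝ}
    (hρ : 0 ≤ ρ) :
    ∀ᵐ ω ∂P, ρ < znorm (Y (exitTime Y ρ ω) ω) ∧ znorm (Y (exitTime Y ρ ω) ω) ≤ ρ + 1 := by
  filter_upwards [hY.ae_exists_lt_znorm ρ, hY.ae_increment_mem_range] with ω hexit hstep
  have hmem : exitTime Y ρ ω ∈ {k | ρ < znorm (Y k ω)} := Nat.sInf_mem hexit
  refine ⟨hmem, ?_⟩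
  obtain ⟨k, hk⟩ : ∃ k, exitTime Y ρ ω = k + 1 := by
    refine Nat.exists_eq_succ_of_ne_zero fun h0 => ?_
    rw [h0] at hmem
    simp [hY.init, znorm_zero] at hmem
    linarith
  have hbefore : znorm (Y k ω) ≤ ρ :=
    not_lt.1 (Nat.notMem_of_lt_sInf (hk ▸ Nat.lt_succ_self k : k < exitTime Y ρ ω))
  obtain ⟨p, hp⟩ := hstep k
  rw [hk, ← sub_add_cancel (Y (k + 1) ω) (Y k ω), ← hp]
  linarith [znorm_add_le (stepVec d p) (Y k ω), znorm_stepVec (d := d) p]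

end IsSRW

structure IsSignedPermInvariant {d : ℕ} (μ : Measure (Fin d → ℤ)) : Prop where
  map_coordFlip : ∀ a, μ.map (coordFlip a) = μ
  map_coordSwap : ∀ a b, μ.map (coordSwap a b) = μ

lemma exitLaw_isSignedPermInvariant {d : ℕ} [NeZero d] (ρ : ℝ) :
    IsSignedPermInvariant (exitLaw d ρ) where
  map_coordFlip a := exitLaw_map_eq ρ _ (znorm_coordFlip a) (coordFlipPerm a) (coordFlip_stepVec a)
  map_coordSwap a b := exitLaw_map_eq ρ _ (znorm_coordSwap a b)
    ((Equiv.swap a b).prodCongr (Equiv.refl Bool)) (coordSwap_stepVec a b)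

lemma integrable_apply_mul_apply {d : ℕ} {μ : Measure (Fin d → ℤ)} [IsFiniteMeasure μ] {R : ℝ}
    (hR : ∀ᵐ x ∂μ, znorm x ≤ R) (a b : Fin d) :
    Integrable (fun x => (x a : ℝ) * x b) μ := by
  refine integrable_of_ae_abs_le (C := R * R) ?_
  filter_upwards [hR] with x hx
  rw [abs_mul]
  exact mul_le_mul ((abs_apply_le_znorm x a).trans hx) ((abs_apply_le_znorm x b).trans hx)
    (abs_nonneg _) ((znorm_nonneg x).trans hx)

namespace IsSignedPermInvariant

variable {d : ℕ} {μ : Measure (Fin d → ℤ)}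

lemma integral_apply (hμ : IsSignedPermInvariant μ) (a : Fin d) : ∫ x, (x a : ℝ) ∂μ = 0 := by
  have h := integral_comp_of_map_eq (hμ.map_coordFlip a) fun x => (x a : ℝ)
  simp [coordFlip, integral_neg] at h
  linarith

lemma integral_apply_mul_apply (hμ : IsSignedPermInvariant μ) {a b : Fin d} (hab : a ≠ b) :
    ∫ x, (x a : ℝ) * x b ∂μ = 0 := by
  have h := integral_comp_of_map_eq (hμ.map_coordFlip a) fun x => (x a : ℝ) * x b
  simp [coordFlip, hab.symm, integral_neg] at h
  linarith

lemma integral_apply_sq (hμ : IsSignedPermInvariant μ) (a b : Fin d) :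
    ∫ x, (x a : ℝ) ^ 2 ∂μ = ∫ x, (x b : ℝ) ^ 2 ∂μ := by
  simpa [coordSwap] using integral_comp_of_map_eq (hμ.map_coordSwap a b) fun x => (x b : ℝ) ^ 2

variable [IsFiniteMeasure μ] {R : ℝ}

lemma integral_sum_mul_apply (hμ : IsSignedPermInvariant μ) (hR : ∀ᵐ x ∂μ, znorm x ≤ R)
    (ξ : Fin d → ℝ) : ∫ x, ∑ i, ξ i * (x i : ℝ) ∂μ = 0 := by
  have hint : ∀ i, Integrable (fun x => (x i : ℝ)) μ := fun i =>
    integrable_of_ae_abs_le (hR.mono fun x hx => (abs_apply_le_znorm x i).trans hx)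
  rw [integral_finsetSum _ fun i _ => (hint i).const_mul _]
  simp [integral_const_mul, hμ.integral_apply]

lemma integral_sum_mul_apply_sq (hμ : IsSignedPermInvariant μ) (hR : ∀ᵐ x ∂μ, znorm x ≤ R)
    (ξ : Fin d → ℝ) :
    ∫ x, (∑ i, ξ i * (x i : ℝ)) ^ 2 ∂μ = (∑ i, ξ i ^ 2) / d * ∫ x, znorm x ^ 2 ∂μ := by
  have hint := integrable_apply_mul_apply hR
  have hsq : ∀ a, ∫ x, (x a : ℝ) ^ 2 ∂μ = (∫ x, znorm x ^ 2 ∂μ) / d := fun a => by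
    have hd : (d : ℝ) ≠ 0 := by exact_mod_cast (Fin.pos a).ne'
    simp_rw [znorm_sq, sq]
    rw [integral_finsetSum _ fun b _ => hint b b, eq_div_iff hd]
    simp_rw [← sq, ← hμ.integral_apply_sq a]
    simp [mul_comm]
  have hdiag : ∀ a b, ∫ x, ξ a * ξ b * ((x a : ℝ) * x b) ∂μ
      = if a = b then ξ a ^ 2 * ((∫ x, znorm x ^ 2 ∂μ) / d) else 0 := fun a b => by
    rw [integral_const_mul]
    split_ifs with hab
    · subst hab; simp_rw [← sq, hsq]
    · rw [hμ.integral_apply_mul_apply hab, mul_zero]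
  simp_rw [sq, Finset.sum_mul_sum, mul_mul_mul_comm]
  rw [integral_finsetSum _ fun a _ => integrable_finsetSum _ fun b _ => (hint a b).const_mul _]
  simp_rw [integral_finsetSum _ fun b _ => (hint _ b).const_mul _, hdiag, Finset.sum_ite_eq,
    Finset.mem_univ, if_true, ← Finset.sum_mul, ← sq]
  ring

end IsSignedPermInvariant

namespace IsSignedPermInvariant

variable {d : ℕ} {μ : Measure (Fin d → ℤ)} [IsProbabilityMeasure μ]

lemma abs_laplace_add_le (hμ : IsSignedPermInvariant μ) {ρ h : ℝ} (hρ : 1 ≤ ρ)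
    (hμρ : ∀ᵐ x ∂μ, znorm x ≤ ρ + 1) (ξ : Fin d → ℝ) (hh : 0 < h) (hξh : 2 * ∑ i, |ξ i| ≤ h) :
    |h ^ 2 * (1 - ∫ x, Real.exp (-(∑ i, ξ i * (x i : ℝ)) / (ρ * h)) ∂μ)
        + (∑ i, ξ i ^ 2) / (2 * d) * ((∫ x, znorm x ^ 2 ∂μ) / ρ ^ 2)|
      ≤ 8 * (∑ i, |ξ i|) ^ 3 / h := by
  set K := ∑ i, |ξ i|
  set Z : (Fin d → ℤ) → ℝ := fun x => (∑ i, ξ i * (x i : ℝ)) / (ρ * h)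
  have hρh : 0 < ρ * h := mul_pos (by linarith) hh
  have hZ : ∀ᵐ x ∂μ, |Z x| ≤ 2 * K / h := by
    filter_upwards [hμρ] with x hx
    rw [abs_div, abs_of_pos hρh, div_le_div_iff₀ hρh hh]
    have hK : 0 ≤ K := Finset.sum_nonneg fun i _ => abs_nonneg _
    have hsum : |∑ i, ξ i * (x i : ℝ)| ≤ 2 * K * ρ := by
      nlinarith [abs_sum_mul_le ξ x, mul_le_mul_of_nonneg_left hx hK]
    nlinarith [mul_le_mul_of_nonneg_right hsum hh.le]
  have hT := abs_integral_exp_neg_sub_le Measurable.of_discrete.aestronglyMeasurable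
    ((div_le_one hh).2 hξh) hZ
  have h1 : ∫ x, Z x ∂μ = 0 := by
    simp only [Z, integral_div, hμ.integral_sum_mul_apply hμρ, zero_div]
  have h2 : ∫ x, Z x ^ 2 ∂μ
      = (∑ i, ξ i ^ 2) / d * (∫ x, znorm x ^ 2 ∂μ) / (ρ * h) ^ 2 := by
    simp only [Z, div_pow, integral_div, hμ.integral_sum_mul_apply_sq hμρ]
  simp only [neg_div] at hT ⊢
  rw [h1, h2] at hT
  have hkey : h ^ 2 * (1 - ∫ x, Real.exp (-Z x) ∂μ)
      + (∑ i, ξ i ^ 2) / (2 * d) * ((∫ x, znorm x ^ 2 ∂μ) / ρ ^ 2)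
      = -h ^ 2 * (∫ x, Real.exp (-Z x) ∂μ
          - (1 - 0 + (∑ i, ξ i ^ 2) / d * (∫ x, znorm x ^ 2 ∂μ) / (ρ * h) ^ 2 / 2)) := by
    field_simp
    ring
  rw [hkey, abs_mul, abs_neg, abs_of_nonneg (sq_nonneg h)]
  calc h ^ 2 * _ ≤ h ^ 2 * (2 * K / h) ^ 3 := mul_le_mul_of_nonneg_left hT (sq_nonneg h)
    _ = 8 * K ^ 3 / h := by field_simp; ring

end IsSignedPermInvariant

section Limit

variable {d : ℕ} {μ : ℕ → Measure (Fin d → ℤ)} [∀ n, IsProbabilityMeasure (μ n)] {ρ h : ℕ → ℝ}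

lemma tendsto_integral_znorm_sq_div_sq (hρ : Tendsto ρ atTop atTop)
    (hshell : ∀ᶠ n in atTop, ∀ᵐ x ∂μ n, ρ n < znorm x ∧ znorm x ≤ ρ n + 1) :
    Tendsto (fun n => (∫ x, znorm x ^ 2 ∂μ n) / ρ n ^ 2) atTop (𝓝 1) := by
  have hupper : Tendsto (fun n => (1 + (ρ n)⁻¹) ^ 2) atTop (𝓝 1) := by
    simpa using ((tendsto_const_nhds (x := (1 : ℝ))).add hρ.inv_tendsto_atTop).pow 2
  refine tendsto_of_tendsto_of_tendsto_of_le_of_le' tendsto_const_nhds hupper ?_ ?_ <;>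
    filter_upwards [hshell, hρ.eventually_gt_atTop 0] with n hn hρn
  all_goals
    have hint : Integrable (fun x => znorm x ^ 2) (μ n) :=
      integrable_of_ae_abs_le (C := (ρ n + 1) ^ 2) <| hn.mono fun x hx => by
        rw [abs_of_nonneg (sq_nonneg _)]
        exact pow_le_pow_left₀ (znorm_nonneg x) hx.2 2
  · rw [le_div_iff₀ (by positivity), one_mul]
    calc ρ n ^ 2 = ∫ _, ρ n ^ 2 ∂μ n := by simp
      _ ≤ _ := integral_mono_ae (integrable_const _) hint <| hn.mono fun x hx =>
        pow_le_pow_left₀ hρn.le hx.1.le 2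
  · rw [div_le_iff₀ (by positivity)]
    calc ∫ x, znorm x ^ 2 ∂μ n ≤ ∫ _, (ρ n + 1) ^ 2 ∂μ n :=
          integral_mono_ae hint (integrable_const _) <| hn.mono fun x hx =>
            pow_le_pow_left₀ (znorm_nonneg x) hx.2 2
      _ = (1 + (ρ n)⁻¹) ^ 2 * ρ n ^ 2 := by field_simp; simp

lemma tendsto_laplace_of_isSignedPermInvariant (hμ : ∀ n, IsSignedPermInvariant (μ n))
    (hρ : Tendsto ρ atTop atTop) (hh : Tendsto h atTop atTop)
    (hshell : ∀ᶠ n in atTop, ∀ᵐ x ∂μ n, ρ n < znorm x ∧ znorm x ≤ ρ n + 1) (ξ : Fin d → ℝ) :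
    Tendsto (fun n => h n ^ 2 * (1 - ∫ x, Real.exp (-(∑ i, ξ i * (x i : ℝ)) / (ρ n * h n)) ∂μ n))
      atTop (𝓝 (-(∑ i, ξ i ^ 2) / (2 * d))) := by
  set K := ∑ i, |ξ i|
  have hmain : Tendsto (fun n => -((∑ i, ξ i ^ 2) / (2 * d)) * ((∫ x, znorm x ^ 2 ∂μ n) / ρ n ^ 2))
      atTop (𝓝 (-(∑ i, ξ i ^ 2) / (2 * d))) := by
    simpa [neg_div] using (tendsto_integral_znorm_sq_div_sq hρ hshell).const_mul
      (-((∑ i, ξ i ^ 2) / (2 * d)))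
  refine hmain.congr_dist (squeeze_zero' (Eventually.of_forall fun _ => dist_nonneg) ?_
    (tendsto_const_nhds.div_atTop hh : Tendsto (fun n => 8 * K ^ 3 / h n) atTop (𝓝 0)))
  filter_upwards [hshell, hρ.eventually_ge_atTop 1, hh.eventually_gt_atTop 0,
    hh.eventually_ge_atTop (2 * K)] with n hn hρn hhn hKn
  rw [dist_comm, Real.dist_eq, neg_mul, sub_neg_eq_add]
  exact (hμ n).abs_laplace_add_le hρn (hn.mono fun x hx => hx.2) ξ hhn hKn

end Limit

theorem stmt_2 {Ω : Type*} [MeasurableSpace Ω] (P : Measure Ω) [IsProbabilityMeasure P]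
    (d : ℕ) (hd : 2 ≤ d) (Y : ℕ → Ω → (Fin d → ℤ)) (hY : IsSRW P d Y)
    (ξ : Fin d → ℝ) (ρ h : ℕ → ℝ)
    (hρ : Tendsto ρ atTop atTop) (hh : Tendsto h atTop atTop) :
    Tendsto (fun n => (h n) ^ 2 *
        (1 - ∫ ω, Real.exp (-(∑ i, ξ i * ((Y (exitTime Y (ρ n) ω) ω i : ℝ))) / (ρ n * h n)) ∂P))
      atTop (nhds (-(∑ i, (ξ i) ^ 2) / (2 * d))) := by
  have : NeZero d := ⟨by omega⟩
  have hlaw := fun n => hY.hasLaw_exitPoint (ρ n)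
  have hshell : ∀ᶠ n in atTop, ∀ᵐ x ∂exitLaw d (ρ n), ρ n < znorm x ∧ znorm x ≤ ρ n + 1 := by
    filter_upwards [hρ.eventually_ge_atTop 0] with n hn
    exact ((hlaw n).ae_iff Measurable.of_discrete).1 (hY.ae_exitPoint_mem_shell hn)
  convert tendsto_laplace_of_isSignedPermInvariant (fun n => exitLaw_isSignedPermInvariant (ρ n))
    hρ hh hshell ξ using 4 with n
  exact (hlaw n).integral_comp (f := fun x => Real.exp (-(∑ i, ξ i * (x i : ℝ)) / (ρ n * h n)))
    Measurable.of_discrete.aestronglyMeasurable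
end

section
/- Let d ≥ 3 and fix 0 < ε < 1 < M and an integer m ≥ 1. ℙ-almost surely, for all n large enough: for every integer i with 0 ≤ i ≤ i_max(n), where i_max(n) is the smallest integer with 2^{i} ν(n) ≥ ι(n), and every x ∈ 𝔻(n), the number of sites of T_ε^M(n) in the cube B_x(2^i ν(n)) of side 2^i ν(n) centered at x is at most n · max(1, 2^{id} ν(n)^d g(n)^{−α}). -/
/-!
Fix `n`, `i` and `x`. The cube of side `ℓ = 2^i ν(n)` contains at most `(2ℓ)^d` lattice sites,
and each of them is a deep trap independently with probability at most
`2 (ε g(n))^{-α} = 2 ε^{-α} 2^{-n}`. By `C(N, k) p^k ≤ (e N p / k)^k`, more than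
`n · max(1, ℓ^d 2^{-n})` of them are traps with probability at most `(e C / n)^n`, where
`C = 2^{d+1} ε^{-α}`. A union bound over the `n + 1` values of `i` and the `2^{O(n)}` lattice points
of `𝔻(n)` leaves a probability at most `2^{-n}`, which is summable, and Borel–Cantelli concludes.
-/

open MeasureTheory ProbabilityTheory Filter Set
open scoped ENNReal NNReal

/-- the smallest integer `i` with `2^i ν(n) ≥ ι(n)`. -/
noncomputable def imax (d n : ℕ) : ℕ := sInf {i : ℕ | iotascale d n ≤ 2 ^ i * nuscale d n}

theorem Nat.choose_le_exp_mul_div_pow (N k : ℕ) :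
    (N.choose k : ℝ) ≤ (Real.exp 1 * N / k) ^ k := by
  have hkk : (0 : ℝ) < (k : ℝ) ^ k := by
    rcases k.eq_zero_or_pos with rfl | hk
    · simp
    · positivity
  have hfact : (0 : ℝ) < k.factorial := by exact_mod_cast k.factorial_pos
  have hstirling : (k : ℝ) ^ k ≤ Real.exp 1 ^ k * k.factorial := by
    rw [← Real.exp_nat_mul, mul_one, ← div_le_iff₀ hfact]
    exact Real.pow_div_factorial_le_exp _ (Nat.cast_nonneg k) k
  calc (N.choose k : ℝ) ≤ (N : ℝ) ^ k / k.factorial := Nat.choose_le_pow_div k N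
    _ ≤ (N : ℝ) ^ k * Real.exp 1 ^ k / (k : ℝ) ^ k := by
      rw [div_le_div_iff₀ hfact hkk, mul_assoc]
      gcongr
    _ = (Real.exp 1 * N / k) ^ k := by rw [div_pow, mul_pow, mul_comm]

section BinomialTail

variable {Ω ι : Type*} [MeasurableSpace Ω] {P : Measure Ω} {τ : ι → Ω → ℝ}
  {F : Finset ι} {u : ℝ} {T : Ω → Set ι}

theorem measure_le_ncard_le_choose_mul_pow (hτ : iIndepFun τ P) (hT : ∀ ω, T ω ⊆ F)
    (hTu : ∀ ω, ∀ y ∈ T ω, u ≤ τ y ω) {p : ℝ≥0∞} (hp : ∀ y, P {ω | u ≤ τ y ω} ≤ p) (k : ℕ) :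
    P {ω | k ≤ (T ω).ncard} ≤ F.card.choose k * p ^ k := by
  have hcover : {ω | k ≤ (T ω).ncard} ⊆ ⋃ s ∈ F.powersetCard k, ⋂ y ∈ s, {ω | u ≤ τ y ω} := by
    intro ω hω
    obtain ⟨t, hts, htk⟩ := Set.exists_subset_card_eq hω
    have htF : t ⊆ F := hts.trans (hT ω)
    lift t to Finset ι using (F.finite_toSet.subset htF)
    refine Set.mem_iUnion₂.mpr ⟨t, Finset.mem_powersetCard.mpr ⟨by exact_mod_cast htF, ?_⟩, ?_⟩
    · rwa [Set.ncard_coe_finset] at htk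
    · exact Set.mem_iInter₂.mpr fun y hy => hTu ω y (hts hy)
  calc P {ω | k ≤ (T ω).ncard}
      ≤ ∑ s ∈ F.powersetCard k, P (⋂ y ∈ s, {ω | u ≤ τ y ω}) :=
        (measure_mono hcover).trans (measure_biUnion_finset_le _ _)
    _ ≤ ∑ s ∈ F.powersetCard k, p ^ k := by
      refine Finset.sum_le_sum fun s hs => ?_
      rw [hτ.meas_biInter (s := fun y => {ω | u ≤ τ y ω})
          fun y _ => ⟨Set.Ici u, measurableSet_Ici, rfl⟩, ← (Finset.mem_powersetCard.mp hs).2]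
      exact Finset.prod_le_pow_card _ _ _ fun y _ => hp y
    _ = F.card.choose k * p ^ k := by
      rw [Finset.sum_const, Finset.card_powersetCard, nsmul_eq_mul]

theorem measure_mul_lt_ncard_le (hτ : iIndepFun τ P) (hT : ∀ ω, T ω ⊆ F)
    (hTu : ∀ ω, ∀ y ∈ T ω, u ≤ τ y ω) {p a c : ℝ} (hp0 : 0 ≤ p)
    (hp : ∀ y, P {ω | u ≤ τ y ω} ≤ ENNReal.ofReal p) (ha : 1 ≤ a)
    (hmean : Real.exp 1 * F.card * p ≤ c * a) {n : ℕ} (hn : 0 < n) (hc : c ≤ n) :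
    P {ω | n * a < (T ω).ncard} ≤ ENNReal.ofReal ((c / n) ^ n) := by
  set k := ⌊n * a⌋₊ + 1
  have hna : (n : ℝ) * a < k := by simpa [k] using Nat.lt_floor_add_one ((n : ℝ) * a)
  have hnk : n ≤ k := by
    have : (n : ℝ) < k := (le_mul_of_one_le_right n.cast_nonneg ha).trans_lt hna
    exact_mod_cast this.le
  have hn' : (0 : ℝ) < n := by exact_mod_cast hn
  have hc0 : 0 ≤ c :=
    nonneg_of_mul_nonneg_left ((by positivity : (0 : ℝ) ≤ Real.exp 1 * F.card * p).trans hmean)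
      (by linarith)
  have hsub : {ω | n * a < (T ω).ncard} ⊆ {ω | k ≤ (T ω).ncard} := fun ω hω =>
    Nat.succ_le_of_lt ((Nat.floor_lt (by positivity)).mpr hω)
  have hbound : (F.card.choose k : ℝ) * p ^ k ≤ (c / n) ^ n :=
    calc (F.card.choose k : ℝ) * p ^ k ≤ (Real.exp 1 * F.card / k) ^ k * p ^ k := by
          gcongr; exact Nat.choose_le_exp_mul_div_pow _ _
      _ = (Real.exp 1 * F.card * p / k) ^ k := by rw [← mul_pow, div_mul_eq_mul_div]
      _ ≤ (c / n) ^ k := by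
          refine pow_le_pow_left₀ (by positivity) ?_ k
          rw [div_le_div_iff₀ (by positivity) hn']
          calc Real.exp 1 * F.card * p * n ≤ c * a * n := by gcongr
            _ = c * (n * a) := by ring
            _ ≤ c * k := by gcongr
      _ ≤ (c / n) ^ n := pow_le_pow_of_le_one (by positivity) (div_le_one_of_le₀ hc hn'.le) hnk
  calc P {ω | n * a < (T ω).ncard} ≤ P {ω | k ≤ (T ω).ncard} := measure_mono hsub
    _ ≤ F.card.choose k * ENNReal.ofReal p ^ k :=
      measure_le_ncard_le_choose_mul_pow hτ hT hTu hp k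
    _ = ENNReal.ofReal ((F.card.choose k : ℝ) * p ^ k) := by
      rw [ENNReal.ofReal_mul (by positivity), ENNReal.ofReal_pow hp0, ENNReal.ofReal_natCast]
    _ ≤ ENNReal.ofReal ((c / n) ^ n) := ENNReal.ofReal_le_ofReal hbound

end BinomialTail

theorem IsEnv.measure_tail_le {Ω : Type*} [MeasurableSpace Ω] {P : Measure Ω} {d : ℕ} {α : ℝ}
    {L : ℝ → ℝ} {τ : (Fin d → ℤ) → Ω → ℝ} (hτ : IsEnv P d α L τ) (x : Fin d → ℤ) {u : ℝ}
    (hu : 1 ≤ u) (hL : L u ≤ 1) :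
    P {ω | u ≤ τ x ω} ≤ ENNReal.ofReal (2 * u ^ (-α)) := by
  rw [hτ.tail x u hu, mul_comm]
  gcongr
  linarith

theorem ae_eventually_notMem_of_eventually_le_pow {α : Type*} [MeasurableSpace α]
    {μ : Measure α} {s : ℕ → Set α} {r : ℝ≥0∞} (hr : r < 1)
    (h : ∀ᶠ n in atTop, μ (s n) ≤ r ^ n) : ∀ᵐ x ∂μ, ∀ᶠ n in atTop, x ∉ s n := by
  obtain ⟨N, hN⟩ := eventually_atTop.mp h
  have hsum : ∑' n, μ (s (n + N)) ≠ ∞ := by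
    refine ne_top_of_le_ne_top ?_ (ENNReal.tsum_le_tsum fun n =>
      (hN _ (Nat.le_add_left N n)).trans (pow_le_pow_right_of_le_one' hr.le (Nat.le_add_right n N)))
    rw [ENNReal.tsum_geometric]
    exact ENNReal.inv_ne_top.mpr (tsub_pos_of_lt hr).ne'
  filter_upwards [ae_eventually_notMem hsum] with x hx
  obtain ⟨M, hM⟩ := eventually_atTop.mp hx
  refine eventually_atTop.mpr ⟨M + N, fun n hn => ?_⟩
  simpa [Nat.sub_add_cancel (le_of_add_le_right hn)] using hM (n - N) (by omega)

theorem abs_coord_le_znorm {d : ℕ} (x : Fin d → ℤ) (j : Fin d) : |(x j : ℝ)| ≤ znorm x := by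
  rw [znorm, ← Real.sqrt_sq_eq_abs]
  exact Real.sqrt_le_sqrt
    (Finset.single_le_sum (f := fun i => (x i : ℝ) ^ 2) (fun i _ => sq_nonneg _)
      (Finset.mem_univ j))

theorem bigD_subset_cube (d m n : ℕ) : bigD d m n ⊆ cube 0 (2 * (m * rscale n)) := fun x hx j => by
  simpa using (abs_coord_le_znorm x j).trans hx

noncomputable def latticeBox {d : ℕ} (x : Fin d → ℤ) (ℓ : ℝ) : Finset (Fin d → ℤ) :=
  Finset.Icc (x - fun _ => ⌊ℓ / 2⌋) (x + fun _ => ⌊ℓ / 2⌋)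

theorem cube_subset_latticeBox {d : ℕ} (x : Fin d → ℤ) (ℓ : ℝ) :
    cube x ℓ ⊆ latticeBox x ℓ := by
  intro y hy
  rw [latticeBox, Finset.coe_Icc]
  refine ⟨fun j => ?_, fun j => ?_⟩
  · have : ((x j - y j : ℤ) : ℝ) ≤ ℓ / 2 := by push_cast; linarith [(abs_le.mp (hy j)).1]
    have := Int.le_floor.mpr this
    simp only [Pi.sub_apply]
    omega
  · have : ((y j - x j : ℤ) : ℝ) ≤ ℓ / 2 := by push_cast; linarith [(abs_le.mp (hy j)).2]
    have := Int.le_floor.mpr this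
    simp only [Pi.add_apply]
    omega

theorem card_latticeBox_le {d : ℕ} (x : Fin d → ℤ) {ℓ : ℝ} (hℓ : 0 ≤ ℓ) :
    ((latticeBox x ℓ).card : ℝ) ≤ (ℓ + 1) ^ d := by
  have hc : (0 : ℤ) ≤ ⌊ℓ / 2⌋ := Int.floor_nonneg.mpr (by linarith)
  have hside : ∀ j, ((Finset.Icc (x j - ⌊ℓ / 2⌋) (x j + ⌊ℓ / 2⌋)).card : ℝ)
      = 2 * ⌊ℓ / 2⌋ + 1 := fun j => by
    rw [Int.card_Icc, show x j + ⌊ℓ / 2⌋ + 1 - (x j - ⌊ℓ / 2⌋) = 2 * ⌊ℓ / 2⌋ + 1 by ring]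
    have : ((2 * ⌊ℓ / 2⌋ + 1).toNat : ℤ) = 2 * ⌊ℓ / 2⌋ + 1 := Int.toNat_of_nonneg (by omega)
    exact_mod_cast this
  rw [latticeBox, Pi.card_Icc, Nat.cast_prod]
  simp only [Pi.sub_apply, Pi.add_apply, hside, Finset.prod_const, Finset.card_univ,
    Fintype.card_fin]
  gcongr
  linarith [Int.floor_le (ℓ / 2)]

theorem one_le_nuscale (d n : ℕ) : 1 ≤ nuscale d n := Real.one_le_rpow one_le_two (by positivity)

theorem one_le_rscale (n : ℕ) : 1 ≤ rscale n := Real.one_le_rpow one_le_two (by positivity)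

theorem rscale_pow_le (d n : ℕ) : rscale n ^ d ≤ (2 ^ d) ^ n := by
  rw [rscale, ← Real.rpow_natCast, ← Real.rpow_mul zero_le_two, ← pow_mul, mul_comm d n,
    ← Real.rpow_natCast 2 (n * d)]
  gcongr
  · exact one_le_two
  · push_cast; nlinarith [n.cast_nonneg (α := ℝ), d.cast_nonneg (α := ℝ)]

theorem imax_le_self (d n : ℕ) : imax d n ≤ n := by
  apply Nat.sInf_le
  calc iotascale d n ≤ 2 ^ (n : ℝ) := by
        apply Real.rpow_le_rpow_of_exponent_le one_le_two
        have : 0 ≤ 2 / (3 * (d : ℝ)) := by positivity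
        nlinarith [n.cast_nonneg (α := ℝ)]
    _ = 2 ^ n := Real.rpow_natCast 2 n
    _ ≤ 2 ^ n * nuscale d n := le_mul_of_one_le_right (by positivity) (one_le_nuscale d n)

theorem gscale_rpow_neg {α : ℝ} (hα : α ≠ 0) (n : ℕ) : gscale α n ^ (-α) = 2 ^ (-(n : ℝ)) := by
  rw [gscale, ← Real.rpow_mul zero_le_two]
  congr 1
  field_simp

theorem tendsto_gscale {α : ℝ} (hα : 0 < α) : Tendsto (gscale α) atTop atTop :=
  (tendsto_rpow_atTop_of_base_gt_one 2 one_lt_two).comp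
    ((tendsto_natCast_atTop_atTop).atTop_div_const hα)

section Overcrowding

variable {Ω : Type*} [MeasurableSpace Ω] {P : Measure Ω} {d : ℕ} {α : ℝ} {L : ℝ → ℝ}
  {τ : (Fin d → ℤ) → Ω → ℝ} {m : ℕ} {ε M : ℝ}

def overcrowded (τ : (Fin d → ℤ) → Ω → ℝ) (α : ℝ) (m : ℕ) (ε M : ℝ) (n i : ℕ)
    (x : Fin d → ℤ) : Set Ω :=
  {ω | (n : ℝ) * max 1 ((2 : ℝ) ^ (i * d) * nuscale d n ^ (d : ℝ) * gscale α n ^ (-α)) <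
      ((traps τ α m ε M n ω ∩ cube x ((2 : ℝ) ^ i * nuscale d n)).ncard : ℝ)}

theorem measure_overcrowded_le (hτ : IsEnv P d α L τ) (hα : 0 < α) (hε : 0 < ε) {n : ℕ}
    (hu : 1 ≤ ε * gscale α n) (hL : L (ε * gscale α n) ≤ 1)
    (hn : Real.exp 1 * (2 ^ (d + 1) * ε ^ (-α)) ≤ n) (i : ℕ) (x : Fin d → ℤ) :
    P (overcrowded τ α m ε M n i x) ≤
      ENNReal.ofReal ((Real.exp 1 * (2 ^ (d + 1) * ε ^ (-α)) / n) ^ n) := by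
  set ℓ := (2 : ℝ) ^ i * nuscale d n
  have hℓ : 1 ≤ ℓ := one_le_mul_of_one_le_of_one_le (one_le_pow₀ one_le_two) (one_le_nuscale d n)
  have hn0 : 0 < n := by
    have : (0 : ℝ) < n := lt_of_lt_of_le (by positivity) hn
    exact_mod_cast this
  have hmean : Real.exp 1 * (latticeBox x ℓ).card * (2 * (ε * gscale α n) ^ (-α)) ≤
      Real.exp 1 * (2 ^ (d + 1) * ε ^ (-α)) *
        max 1 ((2 : ℝ) ^ (i * d) * nuscale d n ^ (d : ℝ) * gscale α n ^ (-α)) :=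
    calc Real.exp 1 * (latticeBox x ℓ).card * (2 * (ε * gscale α n) ^ (-α))
        ≤ Real.exp 1 * (2 * ℓ) ^ d * (2 * (ε ^ (-α) * 2 ^ (-(n : ℝ)))) := by
          rw [Real.mul_rpow hε.le (by unfold gscale; positivity), gscale_rpow_neg hα.ne']
          gcongr
          exact (card_latticeBox_le x (by linarith)).trans (by gcongr; linarith)
      _ = Real.exp 1 * (2 ^ (d + 1) * ε ^ (-α)) *
            ((2 : ℝ) ^ (i * d) * nuscale d n ^ (d : ℝ) * gscale α n ^ (-α)) := by
          rw [gscale_rpow_neg hα.ne', Real.rpow_natCast, pow_mul]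
          ring
      _ ≤ _ := by gcongr; exact le_max_right _ _
  exact measure_mul_lt_ncard_le hτ.indep (fun ω => inter_subset_right.trans
    (cube_subset_latticeBox x ℓ)) (fun ω y hy => hy.1.2.1) (by positivity)
    (fun y => hτ.measure_tail_le y hu hL) (le_max_left _ _) hmean hn0 hn

theorem measure_biUnion_overcrowded_le (hτ : IsEnv P d α L τ) (hα : 0 < α) (hε : 0 < ε)
    {n : ℕ} (hu : 1 ≤ ε * gscale α n) (hL : L (ε * gscale α n) ≤ 1)
    (hn : 2 ^ (d + 3) * (Real.exp 1 * (2 ^ (d + 1) * ε ^ (-α))) ≤ n)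
    (hm : (2 * m + 1) ^ d ≤ 2 ^ n) :
    P (⋃ i ∈ Finset.range (n + 1), ⋃ x ∈ latticeBox 0 (2 * (m * rscale n)),
      overcrowded τ α m ε M n i x) ≤ 2⁻¹ ^ n := by
  set c := Real.exp 1 * (2 ^ (d + 1) * ε ^ (-α))
  set B := latticeBox (0 : Fin d → ℤ) (2 * (m * rscale n))
  have hc0 : 0 < c := by positivity
  have hcn : c ≤ n := le_trans (le_mul_of_one_le_left hc0.le (one_le_pow₀ one_le_two)) hn
  have hn0 : (0 : ℝ) < n := hc0.trans_le hcn
  have hmr : 0 ≤ (m : ℝ) * rscale n := by unfold rscale; positivity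
  have hB : (B.card : ℝ) ≤ 2 ^ n * (2 ^ d) ^ n :=
    calc (B.card : ℝ) ≤ (2 * (m * rscale n) + 1) ^ d := card_latticeBox_le 0 (by positivity)
      _ ≤ ((2 * m + 1) * rscale n) ^ d := by
          refine pow_le_pow_left₀ (by positivity) ?_ d
          linarith [one_le_rscale n, show (2 * m + 1) * rscale n = 2 * (m * rscale n) + rscale n
            by ring]
      _ = (2 * m + 1) ^ d * rscale n ^ d := mul_pow _ _ _
      _ ≤ 2 ^ n * (2 ^ d) ^ n :=
          mul_le_mul (by exact_mod_cast hm) (rscale_pow_le d n) (by unfold rscale; positivity)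
            (by positivity)
  have hn1 : ((n + 1 : ℕ) : ℝ) ≤ 2 ^ n := by exact_mod_cast Nat.lt_two_pow_self
  have hbound : ((n + 1 : ℕ) : ℝ) * B.card * (c / n) ^ n ≤ 2⁻¹ ^ n :=
    calc ((n + 1 : ℕ) : ℝ) * B.card * (c / n) ^ n
        ≤ 2 ^ n * (2 ^ n * (2 ^ d) ^ n) * (c / n) ^ n := by gcongr
      _ = (2 ^ (d + 2) * c / n) ^ n := by
          have (t : ℝ) :
              2 ^ n * (2 ^ n * (2 ^ d) ^ n) * (t / n) ^ n = (2 ^ (d + 2) * t / n) ^ n := by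
            rw [mul_div_assoc, pow_add, mul_pow, mul_pow, show (2 : ℝ) ^ 2 = 2 * 2 by norm_num,
              mul_pow]
            ring
          exact this c
      _ ≤ 2⁻¹ ^ n := by
          gcongr
          rw [div_le_iff₀ hn0]
          linarith [show (2 : ℝ) ^ (d + 3) * c = 2 * (2 ^ (d + 2) * c) by ring]
  calc P (⋃ i ∈ Finset.range (n + 1), ⋃ x ∈ B, overcrowded τ α m ε M n i x)
      ≤ ∑ i ∈ Finset.range (n + 1), ∑ x ∈ B, P (overcrowded τ α m ε M n i x) :=
        (measure_biUnion_finset_le _ _).trans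
          (Finset.sum_le_sum fun i _ => measure_biUnion_finset_le _ _)
    _ ≤ ∑ i ∈ Finset.range (n + 1), ∑ x ∈ B, ENNReal.ofReal ((c / n) ^ n) := by
        gcongr with i _ x _
        exact measure_overcrowded_le hτ hα hε hu hL hcn i x
    _ = ENNReal.ofReal (((n + 1 : ℕ) : ℝ) * B.card * (c / n) ^ n) := by
        rw [ENNReal.ofReal_mul (by positivity), ENNReal.ofReal_mul (by positivity)]
        simp only [Finset.sum_const, Finset.card_range, nsmul_eq_mul, ENNReal.ofReal_natCast,
          mul_assoc]
    _ ≤ ENNReal.ofReal (2⁻¹ ^ n) := ENNReal.ofReal_le_ofReal hbound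
    _ = 2⁻¹ ^ n := by rw [ENNReal.ofReal_pow (by norm_num), ENNReal.ofReal_inv_of_pos two_pos,
        ENNReal.ofReal_ofNat]

end Overcrowding

theorem stmt_6_general {Ω : Type*} [MeasurableSpace Ω] (P : Measure Ω)
    (d : ℕ) (α : ℝ) (hα : α ∈ Set.Ioo (0 : ℝ) 1) (L : ℝ → ℝ)
    (τ : (Fin d → ℤ) → Ω → ℝ) (hτ : IsEnv P d α L τ)
    (ε M : ℝ) (hε : 0 < ε) (m : ℕ) :
    ∀ᵐ ω ∂P, ∃ n₀ : ℕ, ∀ n ≥ n₀, ∀ i ≤ imax d n, ∀ x ∈ bigD d m n,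
      ((traps τ α m ε M n ω ∩ cube x ((2 : ℝ) ^ i * nuscale d n)).ncard : ℝ)
        ≤ (n : ℝ) * max 1 ((2 : ℝ) ^ (i * d) * nuscale d n ^ (d : ℝ) * gscale α n ^ (-α)) := by
  have hεg : Tendsto (fun n : ℕ => ε * gscale α n) atTop atTop :=
    (tendsto_gscale hα.1).const_mul_atTop hε
  have hlarge : ∀ᶠ n : ℕ in atTop, 1 ≤ ε * gscale α n ∧ L (ε * gscale α n) ≤ 1 ∧
      2 ^ (d + 3) * (Real.exp 1 * (2 ^ (d + 1) * ε ^ (-α))) ≤ n ∧ (2 * m + 1) ^ d ≤ 2 ^ n :=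
    (hεg.eventually_ge_atTop 1).and <|
      (hεg.eventually (hτ.decay.eventually (eventually_le_nhds one_pos))).and <|
      (tendsto_natCast_atTop_atTop.eventually_ge_atTop _).and
        ((tendsto_pow_atTop_atTop_of_one_lt one_lt_two).eventually_ge_atTop _)
  have hrare := ae_eventually_notMem_of_eventually_le_pow (ENNReal.inv_lt_one.mpr (by norm_num))
    (hlarge.mono fun n ⟨hu, hL, hn, hm⟩ =>
      measure_biUnion_overcrowded_le (M := M) hτ hα.1 hε hu hL hn hm)
  filter_upwards [hrare] with ω hω
  obtain ⟨n₀, hn₀⟩ := eventually_atTop.mp hω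
  refine ⟨n₀, fun n hn i hi x hx => not_lt.mp fun hcrowded => hn₀ n hn ?_⟩
  exact mem_iUnion₂.mpr ⟨i, Finset.mem_range.mpr (Nat.lt_succ_of_le (hi.trans (imax_le_self d n))),
    mem_iUnion₂.mpr ⟨x, cube_subset_latticeBox _ _ (bigD_subset_cube d m n hx), hcrowded⟩⟩

theorem stmt_6 {Ω : Type*} [MeasurableSpace Ω] (P : Measure Ω) [IsProbabilityMeasure P]
    (d : ℕ) (hd : 3 ≤ d) (α : ℝ) (hα : α ∈ Set.Ioo (0 : ℝ) 1) (L : ℝ → ℝ)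
    (τ : (Fin d → ℤ) → Ω → ℝ) (hτ : IsEnv P d α L τ)
    (ε M : ℝ) (hε : 0 < ε) (hε1 : ε < 1) (hM : 1 < M) (m : ℕ) (hm : 1 ≤ m) :
    ∀ᵐ ω ∂P, ∃ n₀ : ℕ, ∀ n ≥ n₀, ∀ i ≤ imax d n, ∀ x ∈ bigD d m n,
      ((traps τ α m ε M n ω ∩ cube x ((2 : ℝ) ^ i * nuscale d n)).ncard : ℝ)
        ≤ (n : ℝ) * max 1 ((2 : ℝ) ^ (i * d) * nuscale d n ^ (d : ℝ) * gscale α n ^ (-α)) :=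
  stmt_6_general P d α hα L τ hτ ε M hε m
end

section
/- Let α ∈ (0,1), 0 < ε < 1 < M, and let τ_0 be a positive random variable with ℙ[τ_0 ≥ u] = u^{−α}(1 + L(u)) for u ≥ 1, where L(u) → 0 as u → ∞. Set g(n) = 2^{n/α} and σ(n) = n^{−1} + (sup_{x ≥ ε} |L(g(n) x)|)^{1/2}. Then for every δ > 0 there exists n₀ such that for all n ≥ n₀ and all real z, z′ with ε ≤ z < z′ ≤ M and σ(n) < z′ − z < 2σ(n): (1 − δ) g(n)^{−α}(z^{−α} − z′^{−α}) ≤ ℙ[z g(n) ≤ τ_0 < z′ g(n)] ≤ (1 + δ) g(n)^{−α}(z^{−α} − z′^{−α}). -/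
open MeasureTheory ProbabilityTheory Filter Set
open scoped ENNReal NNReal

/-- the error scale `σ(n) = n⁻¹ + (sup_{x ≥ ε} |L(g(n)x)|)^{1/2}`. -/
noncomputable def sigmaFn (L : ℝ → ℝ) (α ε : ℝ) (n : ℕ) : ℝ :=
  ((n : ℝ))⁻¹ + Real.sqrt (sSup {y | ∃ x, ε ≤ x ∧ y = |L (gscale α n * x)|})

set_option maxHeartbeats 2000000 in
theorem stmt_8 {Ω : Type*} [MeasurableSpace Ω] (P : Measure Ω) [IsProbabilityMeasure P]
    (α : ℝ) (hα : α ∈ Set.Ioo (0 : ℝ) 1) (ε M : ℝ) (hε : 0 < ε) (hε1 : ε < 1) (hM : 1 < M)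
    (L : ℝ → ℝ) (hL : Tendsto L atTop (nhds 0))
    (τ₀ : Ω → ℝ) (hmeas : Measurable τ₀) (hpos : ∀ ω, 0 < τ₀ ω)
    (htail : ∀ u : ℝ, 1 ≤ u → P {ω | u ≤ τ₀ ω} = ENNReal.ofReal (u ^ (-α) * (1 + L u))) :
    ∀ δ > (0 : ℝ), ∃ n₀ : ℕ, ∀ n ≥ n₀, ∀ z z' : ℝ,
      ε ≤ z → z < z' → z' ≤ M →
      sigmaFn L α ε n < z' - z → z' - z < 2 * sigmaFn L α ε n →
      (1 - δ) * gscale α n ^ (-α) * (z ^ (-α) - z' ^ (-α))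
          ≤ (P {ω | z * gscale α n ≤ τ₀ ω ∧ τ₀ ω < z' * gscale α n}).toReal ∧
        (P {ω | z * gscale α n ≤ τ₀ ω ∧ τ₀ ω < z' * gscale α n}).toReal
          ≤ (1 + δ) * gscale α n ^ (-α) * (z ^ (-α) - z' ^ (-α)) := by
  obtain ⟨hα0, hα1⟩ := hα
  intro δ hδ
  have hM0 : (0 : ℝ) < M := lt_trans one_pos hM
  have hMα : (0 : ℝ) < M ^ (-α - 1) := Real.rpow_pos_of_pos hM0 _
  have hεα : (0 : ℝ) < ε ^ α := Real.rpow_pos_of_pos hε _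
  set r : ℝ := δ * α * M ^ (-α - 1) * ε ^ α / 2 with hr_def
  have hr : 0 < r := by positivity
  set η : ℝ := min (r ^ 2) 2⁻¹ with hη_def
  have hη : 0 < η := lt_min (by positivity) (by norm_num)
  have hη2 : η ≤ 2⁻¹ := min_le_right _ _
  have hηr : η ≤ r ^ 2 := min_le_left _ _
  -- choose T with |L u| ≤ η for u ≥ T
  have hLev : ∀ᶠ u in atTop, |L u| ≤ η := by
    have := Metric.tendsto_nhds.mp hL η hη
    filter_upwards [this] with u hu
    simpa [Real.dist_eq] using hu.le
  obtain ⟨T, hT⟩ := eventually_atTop.mp hLev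
  -- gscale tends to infinity
  have hgto : Tendsto (fun n : ℕ => gscale α n) atTop atTop := by
    have h1 : Tendsto (fun n : ℕ => ((n : ℝ) / α) * Real.log 2) atTop atTop :=
      (tendsto_natCast_atTop_atTop.atTop_div_const hα0).atTop_mul_const
        (Real.log_pos one_lt_two)
    have h2 := Real.tendsto_exp_atTop.comp h1
    refine h2.congr fun n => ?_
    simp only [Function.comp_apply, gscale]
    rw [Real.rpow_def_of_pos two_pos, mul_comm]
  obtain ⟨n₀, hn₀⟩ := eventually_atTop.mp (hgto.eventually_ge_atTop (max T 1 / ε))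
  refine ⟨n₀, ?_⟩
  intro n hn z z' hz hzz' hz'M hσ1 _hσ2
  set g : ℝ := gscale α n with hg_def
  have hgpos : 0 < g := Real.rpow_pos_of_pos two_pos _
  have hεg : max T 1 ≤ ε * g := by
    have := hn₀ n hn
    rw [div_le_iff₀ hε] at this
    linarith [this]
  have hεg1 : 1 ≤ ε * g := le_trans (le_max_right _ _) hεg
  have hεgT : T ≤ ε * g := le_trans (le_max_left _ _) hεg
  -- sup bound facts
  set Sset : Set ℝ := {y | ∃ x, ε ≤ x ∧ y = |L (g * x)|} with hSset_def
  have hbound : ∀ x, ε ≤ x → |L (g * x)| ≤ η := by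
    intro x hx
    apply hT
    calc T ≤ ε * g := hεgT
    _ ≤ x * g := mul_le_mul_of_nonneg_right hx hgpos.le
    _ = g * x := mul_comm _ _
  have hne : Sset.Nonempty := ⟨|L (g * ε)|, ε, le_refl _, rfl⟩
  have hbdd : BddAbove Sset := by
    refine ⟨η, ?_⟩
    rintro y ⟨x, hx, rfl⟩
    exact hbound x hx
  set S : ℝ := sSup Sset with hS_def
  have hSle : S ≤ η := csSup_le hne (by rintro y ⟨x, hx, rfl⟩; exact hbound x hx)
  have hSmem : ∀ x, ε ≤ x → |L (g * x)| ≤ S := fun x hx => le_csSup hbdd ⟨x, hx, rfl⟩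
  have hS0 : 0 ≤ S := le_trans (abs_nonneg _) (hSmem ε le_rfl)
  have hsqS : Real.sqrt S ≤ sigmaFn L α ε n := by
    have : sigmaFn L α ε n = ((n : ℝ))⁻¹ + Real.sqrt S := rfl
    rw [this]
    have : (0:ℝ) ≤ ((n : ℝ))⁻¹ := by positivity
    linarith
  clear_value S Sset g
  -- positivity
  have hz0 : 0 < z := lt_of_lt_of_le hε hz
  have hz'0 : 0 < z' := lt_trans hz0 hzz'
  have hzg1 : 1 ≤ z * g :=
    le_trans hεg1 (mul_le_mul_of_nonneg_right hz hgpos.le)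
  have hz'g1 : 1 ≤ z' * g :=
    le_trans hzg1 (mul_le_mul_of_nonneg_right hzz'.le hgpos.le)
  have hLz : |L (z * g)| ≤ S := by rw [mul_comm]; exact hSmem z hz
  have hLz' : |L (z' * g)| ≤ S := by rw [mul_comm]; exact hSmem z' (le_trans hz hzz'.le)
  have h1Lz : 0 < 1 + L (z * g) := by
    have := abs_le.1 hLz
    nlinarith
  have h1Lz' : 0 < 1 + L (z' * g) := by
    have := abs_le.1 hLz'
    nlinarith
  -- measure computation
  have hAB : {ω | z' * g ≤ τ₀ ω} ⊆ {ω | z * g ≤ τ₀ ω} := by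
    intro ω hω
    have : z * g ≤ z' * g := mul_le_mul_of_nonneg_right hzz'.le hgpos.le
    exact le_trans this hω
  have hmeasA : MeasurableSet {ω | z' * g ≤ τ₀ ω} := measurableSet_le measurable_const hmeas
  have hsplit : {ω | z * g ≤ τ₀ ω ∧ τ₀ ω < z' * g}
      = {ω | z * g ≤ τ₀ ω} \ {ω | z' * g ≤ τ₀ ω} := by
    ext ω; simp [Set.mem_diff, not_le]
  have hPdiff : P ({ω | z * g ≤ τ₀ ω} \ {ω | z' * g ≤ τ₀ ω})
      = P {ω | z * g ≤ τ₀ ω} - P {ω | z' * g ≤ τ₀ ω} :=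
    measure_diff hAB hmeasA.nullMeasurableSet (measure_ne_top P _)
  have hB := htail (z * g) hzg1
  have hA := htail (z' * g) hz'g1
  have hbval0 : 0 ≤ (z * g) ^ (-α) * (1 + L (z * g)) := by
    have := Real.rpow_pos_of_pos (by positivity : (0:ℝ) < z * g) (-α)
    positivity
  have haval0 : 0 ≤ (z' * g) ^ (-α) * (1 + L (z' * g)) := by
    have := Real.rpow_pos_of_pos (by positivity : (0:ℝ) < z' * g) (-α)
    positivity
  have hQ : (P {ω | z * g ≤ τ₀ ω ∧ τ₀ ω < z' * g}).toReal
      = (z * g) ^ (-α) * (1 + L (z * g)) - (z' * g) ^ (-α) * (1 + L (z' * g)) := by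
    rw [hsplit, hPdiff, ENNReal.toReal_sub_of_le (measure_mono hAB) (measure_ne_top P _),
      hA, hB, ENNReal.toReal_ofReal hbval0, ENNReal.toReal_ofReal haval0]
  -- notation for main and error terms
  set G : ℝ := g ^ (-α) with hG_def
  have hGpos : 0 < G := Real.rpow_pos_of_pos hgpos _
  set D : ℝ := z ^ (-α) - z' ^ (-α) with hD_def
  set E : ℝ := z ^ (-α) * L (z * g) - z' ^ (-α) * L (z' * g) with hE_def
  have hQ2 : (P {ω | z * g ≤ τ₀ ω ∧ τ₀ ω < z' * g}).toReal = G * (D + E) := by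
    rw [hQ, Real.mul_rpow hz0.le hgpos.le, Real.mul_rpow hz'0.le hgpos.le]
    ring
  clear_value G D E
  -- MVT lower bound on D
  have hD_lb : α * M ^ (-α - 1) * (z' - z) ≤ D := by
    obtain ⟨c, hc, hceq⟩ := exists_hasDerivAt_eq_slope (fun x : ℝ => x ^ (-α))
      (fun x : ℝ => (-α) * x ^ (-α - 1)) hzz'
      (fun x hx => by
        have hx0 : x ≠ 0 := ne_of_gt (lt_of_lt_of_le hz0 hx.1)
        exact (Real.continuousAt_rpow_const x (-α) (Or.inl hx0)).continuousWithinAt)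
      (fun x hx => Real.hasDerivAt_rpow_const (Or.inl (ne_of_gt (lt_trans hz0 hx.1))))
    have hc0 : 0 < c := lt_trans hz0 hc.1
    have hcM : c ≤ M := le_trans hc.2.le hz'M
    have hcr : M ^ (-α - 1) ≤ c ^ (-α - 1) :=
      Real.rpow_le_rpow_of_nonpos hc0 hcM (by linarith)
    have hzz0 : z' - z ≠ 0 := sub_ne_zero.2 hzz'.ne'
    have hslope : z' ^ (-α) - z ^ (-α) = (-α) * c ^ (-α - 1) * (z' - z) := by
      rw [hceq, div_mul_cancel₀ _ hzz0]
    have hDeq : D = α * c ^ (-α - 1) * (z' - z) := by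
      rw [hD_def]; linarith [hslope]
    rw [hDeq]
    have hz'z : 0 ≤ z' - z := by linarith
    have h := mul_le_mul_of_nonneg_left (mul_le_mul_of_nonneg_right hcr hz'z) hα0.le
    linarith [h]
  have hσpos : 0 ≤ Real.sqrt S := Real.sqrt_nonneg _
  have hDσ : α * M ^ (-α - 1) * Real.sqrt S ≤ D := by
    have h1 : Real.sqrt S ≤ z' - z := le_trans hsqS hσ1.le
    have h2 := mul_le_mul_of_nonneg_left h1 (by positivity : (0:ℝ) ≤ α * M ^ (-α - 1))
    linarith [hD_lb, h2]
  have hD0 : 0 < D := by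
    have : α * M ^ (-α - 1) * (z' - z) > 0 := by
      have : 0 < z' - z := by linarith
      positivity
    linarith [hD_lb]
  -- error bound
  have hεz : z ^ (-α) ≤ ε ^ (-α) := Real.rpow_le_rpow_of_nonpos hε hz (by linarith)
  have hεz' : z' ^ (-α) ≤ ε ^ (-α) :=
    Real.rpow_le_rpow_of_nonpos hε (le_trans hz hzz'.le) (by linarith)
  have hzα0 : 0 < z ^ (-α) := Real.rpow_pos_of_pos hz0 _
  have hz'α0 : 0 < z' ^ (-α) := Real.rpow_pos_of_pos hz'0 _
  have hεα0 : 0 < ε ^ (-α) := Real.rpow_pos_of_pos hε _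
  have hE_abs : |E| ≤ 2 * ε ^ (-α) * S := by
    have h1 : |z ^ (-α) * L (z * g)| ≤ ε ^ (-α) * S := by
      rw [abs_mul, abs_of_pos hzα0]
      exact mul_le_mul hεz hLz (abs_nonneg _) hεα0.le
    have h2 : |z' ^ (-α) * L (z' * g)| ≤ ε ^ (-α) * S := by
      rw [abs_mul, abs_of_pos hz'α0]
      exact mul_le_mul hεz' hLz' (abs_nonneg _) hεα0.le
    rw [hE_def]
    calc |z ^ (-α) * L (z * g) - z' ^ (-α) * L (z' * g)|
        ≤ |z ^ (-α) * L (z * g)| + |z' ^ (-α) * L (z' * g)| := abs_sub _ _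
    _ ≤ 2 * ε ^ (-α) * S := by linarith
  have hsqr : Real.sqrt S ≤ r := by
    calc Real.sqrt S ≤ Real.sqrt (r ^ 2) := Real.sqrt_le_sqrt (le_trans hSle hηr)
    _ = r := Real.sqrt_sq hr.le
  have hεinv : ε ^ (-α) * ε ^ α = 1 := by
    rw [← Real.rpow_add hε]; simp
  have hEδD : |E| ≤ δ * D := by
    have hSsq : S = Real.sqrt S * Real.sqrt S := (Real.mul_self_sqrt hS0).symm
    have key : 2 * ε ^ (-α) * S ≤ δ * (α * M ^ (-α - 1) * Real.sqrt S) := by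
      have h1 : S ≤ r * Real.sqrt S := by
        calc S = Real.sqrt S * Real.sqrt S := hSsq
        _ ≤ r * Real.sqrt S := mul_le_mul_of_nonneg_right hsqr hσpos
      calc 2 * ε ^ (-α) * S ≤ 2 * ε ^ (-α) * (r * Real.sqrt S) :=
        mul_le_mul_of_nonneg_left h1 (by positivity)
      _ = δ * (α * M ^ (-α - 1) * Real.sqrt S) := by
        rw [hr_def]
        linear_combination (δ * α * M ^ (-α - 1) * Real.sqrt S) * hεinv
    calc |E| ≤ 2 * ε ^ (-α) * S := hE_abs
    _ ≤ δ * (α * M ^ (-α - 1) * Real.sqrt S) := key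
    _ ≤ δ * D := mul_le_mul_of_nonneg_left hDσ hδ.le
  obtain ⟨hE1, hE2⟩ := abs_le.1 hEδD
  rw [hQ2]
  constructor
  · have h := mul_le_mul_of_nonneg_left (show (1 - δ) * D ≤ D + E by linarith) hGpos.le
    calc (1 - δ) * G * D = G * ((1 - δ) * D) := by ring
    _ ≤ G * (D + E) := h
  · have h := mul_le_mul_of_nonneg_left (show D + E ≤ (1 + δ) * D by linarith) hGpos.le
    calc G * (D + E) ≤ G * ((1 + δ) * D) := h
    _ = (1 + δ) * G * D := by ring
end
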